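/- Let n, m ≥ 1 and let f₀, f₁, …, f_m : ℝⁿ → ℝⁿ be continuously differentiable vector fields with [f₀, f_i](x) = 0 for all x ∈ ℝⁿ and all i = 1, …, m. Define H₀(x, p) = ⟨p, f₀(x)⟩ and the characteristic fields Z_i(x, p) = ( f_i(x), −(Df_i(x))ᵀ p ) on ℝⁿ × ℝⁿ for i = 1, …, m, and for each i let g_i : ℝ × ℝ^{2n} → ℝ^{2n} be a flow of Z_i (g_i(0, y) = y and ∂_t g_i(t, y) = Z_i(g_i(t, y))). Then for every z₀ = (x₀, p₀) ∈ ℝⁿ × ℝⁿ and every λ = (t₁, …, t_m) ∈ ℝ^m, the composed orbit ẑ(λ, z₀) = g₁(t₁, g₂(t₂, …, g_m(t_m, z₀)…)) satisfies H₀(ẑ(λ, z₀)) = ⟨p₀, f₀(x₀)⟩. -/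

import Mathlib

open Matrix

/-- The Lie bracket `[g, h](x) = Dh(x) g(x) − Dg(x) h(x)` of vector fields on
`ℝⁿ`, where `D` denotes the Jacobian (Fréchet derivative). -/
noncomputable def lieB {n : ℕ} (g h : (Fin n → ℝ) → Fin n → ℝ)
    (x : Fin n → ℝ) : Fin n → ℝ :=
  fderiv ℝ h x (g x) - fderiv ℝ g x (h x)

/-- The characteristic field `Z(x, p) = (f(x), −(Df(x))ᵀ p)` on `ℝⁿ × ℝⁿ` of
the function `H(x, p) = ⟨p, f(x)⟩`, where
`(−(Df(x))ᵀ p)ₐ = −∑ b, p_b (Df(x))_{b a}`. -/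
noncomputable def charF {n : ℕ} (f : (Fin n → ℝ) → Fin n → ℝ)
    (z : (Fin n → ℝ) × (Fin n → ℝ)) : (Fin n → ℝ) × (Fin n → ℝ) :=
  (f z.1, fun a => -(∑ b, z.2 b * fderiv ℝ f z.1 (Pi.single a 1) b))

/-- The composed orbit `ẑ(λ, z₀) = g₁(t₁, g₂(t₂, …, g_m(t_m, z₀)…))` of the
flows `g₁, …, g_m` starting from `z₀`, where `λ = (t₁, …, t_m)`. -/
def orbit {V : Type*} {m : ℕ} (g : Fin m → ℝ → V → V)
    (l : Fin m → ℝ) (z₀ : V) : V :=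
  (List.ofFn fun i : Fin m => g i (l i)).foldr (fun φ z => φ z) z₀

/-!
Along a flow line `(x, p)` of `Zᵢ`, the derivative of `H₀(x, p) = ⟨p, f₀(x)⟩` is the Poisson
bracket `{H₀, Hᵢ}(x, p) = ⟨p, Df₀(x) fᵢ(x)⟩ − ⟨p, Dfᵢ(x) f₀(x)⟩ = −⟨p, [f₀, fᵢ](x)⟩`, which
vanishes. So every flow `gᵢ(t, ·)` preserves `H₀`, and hence so does their composition.
-/

theorem HasDerivAt.dotProduct {𝕜 ι : Type*} [NontriviallyNormedField 𝕜] [Fintype ι]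
    {u v : 𝕜 → ι → 𝕜} {u' v' : ι → 𝕜} {t : 𝕜}
    (hu : HasDerivAt u u' t) (hv : HasDerivAt v v' t) :
    HasDerivAt (fun s => u s ⬝ᵥ v s) (u' ⬝ᵥ v t + u t ⬝ᵥ v') t := by
  rw [hasDerivAt_pi] at hu hv
  simp only [_root_.dotProduct, ← Finset.sum_add_distrib]
  exact HasDerivAt.fun_sum fun i _ => (hu i).fun_mul (hv i)

theorem charF_snd_dotProduct {n : ℕ} (f : (Fin n → ℝ) → Fin n → ℝ) (x p v : Fin n → ℝ) :
    (charF f (x, p)).2 ⬝ᵥ v = -(p ⬝ᵥ fderiv ℝ f x v) := by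
  have hDf : fderiv ℝ f x v = ∑ a, v a • fderiv ℝ f x (Pi.single a 1) := by
    conv_lhs => rw [pi_eq_sum_univ' v]
    simp only [map_sum, map_smul]
  simp only [charF, dotProduct, hDf, Finset.sum_apply, Pi.smul_apply, smul_eq_mul,
    Finset.mul_sum, neg_mul, Finset.sum_neg_distrib, Finset.sum_mul]
  rw [Finset.sum_comm]
  congr 1
  refine Finset.sum_congr rfl fun a _ => Finset.sum_congr rfl fun b _ => ?_
  ring

def hamiltonian {n : ℕ} (f : (Fin n → ℝ) → Fin n → ℝ) (z : (Fin n → ℝ) × (Fin n → ℝ)) : ℝ :=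
  z.2 ⬝ᵥ f z.1

theorem hasDerivAt_hamiltonian_comp_of_charF {n : ℕ} {f₀ f : (Fin n → ℝ) → Fin n → ℝ}
    {γ : ℝ → (Fin n → ℝ) × (Fin n → ℝ)} {t : ℝ}
    (hf₀ : DifferentiableAt ℝ f₀ (γ t).1) (hγ : HasDerivAt γ (charF f (γ t)) t) :
    HasDerivAt (fun s => hamiltonian f₀ (γ s)) (-((γ t).2 ⬝ᵥ lieB f₀ f (γ t).1)) t := by
  have hx : HasDerivAt (fun s => (γ s).1) (f (γ t).1) t :=
    (ContinuousLinearMap.fst ℝ (Fin n → ℝ) (Fin n → ℝ)).hasFDerivAt.comp_hasDerivAt t hγ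
  have hp : HasDerivAt (fun s => (γ s).2) (charF f (γ t)).2 t :=
    (ContinuousLinearMap.snd ℝ (Fin n → ℝ) (Fin n → ℝ)).hasFDerivAt.comp_hasDerivAt t hγ
  refine (hp.dotProduct (hf₀.hasFDerivAt.comp_hasDerivAt t hx)).congr_deriv ?_
  rw [charF_snd_dotProduct, lieB, dotProduct_sub, Function.comp_apply]
  ring

theorem hamiltonian_comp_eq_of_charF_flow {n : ℕ} {f₀ f : (Fin n → ℝ) → Fin n → ℝ}
    {γ : ℝ → (Fin n → ℝ) × (Fin n → ℝ)}
    (hf₀ : Differentiable ℝ f₀) (hcomm : ∀ x, lieB f₀ f x = 0)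
    (hγ : ∀ t, HasDerivAt γ (charF f (γ t)) t) (t : ℝ) :
    hamiltonian f₀ (γ t) = hamiltonian f₀ (γ 0) := by
  have hderiv : ∀ s, HasDerivAt (fun u => hamiltonian f₀ (γ u)) 0 s := fun s => by
    simpa only [hcomm, dotProduct_zero, neg_zero] using
      hasDerivAt_hamiltonian_comp_of_charF (hf₀ _) (hγ s)
  exact is_const_of_deriv_eq_zero (fun s => (hderiv s).differentiableAt)
    (fun s => (hderiv s).deriv) t 0

theorem apply_orbit_eq {V β : Type*} {m : ℕ} (H : V → β) (g : Fin m → ℝ → V → V)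
    (l : Fin m → ℝ) (hg : ∀ i z, H (g i (l i) z) = H z) (z₀ : V) :
    H (orbit g l z₀) = H z₀ := by
  suffices ∀ L : List (V → V), (∀ φ ∈ L, ∀ z, H (φ z) = H z) →
      H (L.foldr (fun φ z => φ z) z₀) = H z₀ from
    this _ fun φ hφ => by
      obtain ⟨i, rfl⟩ := List.mem_ofFn.mp hφ
      exact hg i
  intro L hL
  induction L with
  | nil => rfl
  | cons φ L ih =>
    rw [List.foldr_cons, hL φ List.mem_cons_self,
      ih fun ψ hψ => hL ψ (List.mem_cons_of_mem _ hψ)]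

theorem stationary_solution_commuting_fields_general
    (n m : ℕ)
    (f₀ : (Fin n → ℝ) → Fin n → ℝ) (hf₀ : ContDiff ℝ 1 f₀)
    (f : Fin m → (Fin n → ℝ) → Fin n → ℝ)
    (hcomm : ∀ i x, lieB f₀ (f i) x = 0)
    (g : Fin m → ℝ → ((Fin n → ℝ) × (Fin n → ℝ)) → (Fin n → ℝ) × (Fin n → ℝ))
    (hg0 : ∀ i y, g i 0 y = y)
    (hgflow : ∀ i t y, HasDerivAt (fun s => g i s y) (charF (f i) (g i t y)) t)
    (z₀ : (Fin n → ℝ) × (Fin n → ℝ)) (l : Fin m → ℝ) :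
    (orbit g l z₀).2 ⬝ᵥ f₀ (orbit g l z₀).1 = z₀.2 ⬝ᵥ f₀ z₀.1 := by
  have hflow_preserves : ∀ i t z, hamiltonian f₀ (g i t z) = hamiltonian f₀ z := fun i t z => by
    simpa only [hg0] using hamiltonian_comp_eq_of_charF_flow (hf₀.differentiable one_ne_zero)
      (hcomm i) (hgflow i · z) t
  exact apply_orbit_eq (hamiltonian f₀) g l (fun i => hflow_preserves i (l i)) z₀

/-- let `f₀, f₁, …, f_m : ℝⁿ → ℝⁿ` be continuously
differentiable with `[f₀, fᵢ] ≡ 0` for `i = 1, …, m`. With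
`H₀(x, p) = ⟨p, f₀(x)⟩`, the characteristic fields
`Zᵢ(x, p) = (fᵢ(x), −(Dfᵢ(x))ᵀ p)` and `gᵢ` a flow of `Zᵢ`, for every
`z₀ = (x₀, p₀)` and every `λ = (t₁, …, t_m) ∈ ℝ^m` the composed orbit
`ẑ(λ, z₀) = g₁(t₁, g₂(t₂, …, g_m(t_m, z₀)…))` satisfies
`H₀(ẑ(λ, z₀)) = ⟨p₀, f₀(x₀)⟩`. -/
theorem stationary_solution_commuting_fields
    (n m : ℕ) (hn : 1 ≤ n) (hm : 1 ≤ m)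
    (f₀ : (Fin n → ℝ) → Fin n → ℝ) (hf₀ : ContDiff ℝ 1 f₀)
    (f : Fin m → (Fin n → ℝ) → Fin n → ℝ) (hf : ∀ i, ContDiff ℝ 1 (f i))
    (hcomm : ∀ i x, lieB f₀ (f i) x = 0)
    (g : Fin m → ℝ → ((Fin n → ℝ) × (Fin n → ℝ)) → (Fin n → ℝ) × (Fin n → ℝ))
    (hg0 : ∀ i y, g i 0 y = y)
    (hgflow : ∀ i t y, HasDerivAt (fun s => g i s y) (charF (f i) (g i t y)) t)
    (z₀ : (Fin n → ℝ) × (Fin n → ℝ)) (l : Fin m → ℝ) :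
    (orbit g l z₀).2 ⬝ᵥ f₀ (orbit g l z₀).1 = z₀.2 ⬝ᵥ f₀ z₀.1 :=
  stationary_solution_commuting_fields_general n m f₀ hf₀ f hcomm g hg0 hgflow z₀ l
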